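/- arXiv:1309.7526 — 2 statements merged into one kernel-verified Lean document; each statement's English description precedes it below -/
import Mathlib

section
/- Let d ≥ 1, N ∈ ℕ, κ ∈ ℝ^{d+1} with each κ_i > −1, and let β ∈ ℕ^{d+1} with |β| ≤ N. Then for every y ∈ ℝ^{d+1} with s := y_1+⋯+y_{d+1} ≠ 0, the monic Jacobi polynomial on the simplex is a generating function for the monic Hahn polynomials: s^N · R_β^κ(y_1/s, …, y_d/s) = ((−1)^{|β|}/(−N)_{|β|}) · Σ_{α ∈ Z_N^{d+1}} (N!/α!) · Q_β(α; κ, N) · y^α. -/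
open Finset

/-- Pochhammer symbol `(a)_k = a (a+1) ⋯ (a+k-1)`. -/
noncomputable def poch (a : ℝ) : ℕ → ℝ
  | 0 => 1
  | k + 1 => poch a k * (a + k)

/-- Multi-index Pochhammer `(x)_γ = ∏ i (x i)_{γ i}`. -/
noncomputable def pochV {m : ℕ} (x : Fin m → ℝ) (γ : Fin m → ℕ) : ℝ :=
  ∏ i, poch (x i) (γ i)

/-- Multi-index factorial `γ! = ∏ i (γ i)!` (as a real number). -/
noncomputable def mfact {m : ℕ} (γ : Fin m → ℕ) : ℝ :=
  ∏ i, (Nat.factorial (γ i) : ℝ)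

/-- Shifted monomial `m_γ(x) = (-1)^{|γ|} (-x)_γ`. -/
noncomputable def mono {m : ℕ} (γ : Fin m → ℕ) (x : Fin m → ℝ) : ℝ :=
  (-1 : ℝ) ^ (∑ i, γ i) * pochV (fun i => -(x i)) γ

/-- `Z_N^{d+1} = {α ∈ ℕ^{d+1} : |α| = N}` as a finite set. -/
def ZN (d N : ℕ) : Finset (Fin (d + 1) → ℕ) :=
  (Fintype.piFinset fun _ => Finset.range (N + 1)).filter fun α => ∑ i, α i = N

/-- `{ν ∈ ℕ^d : |ν| = n}` as a finite set. -/
def idxSet (d n : ℕ) : Finset (Fin d → ℕ) :=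
  (Fintype.piFinset fun _ => Finset.range (n + 1)).filter fun ν => ∑ i, ν i = n

/-- The finite set `{γ ∈ ℕ^m : γ ≤ α}`. -/
def below {m : ℕ} (α : Fin m → ℕ) : Finset (Fin m → ℕ) :=
  Fintype.piFinset fun i => Finset.range (α i + 1)

/-- Monic Hahn polynomial `Q_α(x; κ, N)`. -/
noncomputable def monicQ (d N : ℕ) (κ : Fin (d + 1) → ℝ) (α : Fin (d + 1) → ℕ)
    (x : Fin (d + 1) → ℝ) : ℝ :=
  poch (-(N : ℝ)) (∑ i, α i) * pochV (fun i => κ i + 1) α /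
      poch ((∑ i, κ i) + d + (∑ i, α i)) (∑ i, α i) *
    ∑ γ ∈ below α,
      pochV (fun i => -(α i : ℝ)) γ * poch ((∑ i, κ i) + d + (∑ i, α i)) (∑ i, γ i) *
          (-1 : ℝ) ^ (∑ i, γ i) /
          (mfact γ * pochV (fun i => κ i + 1) γ * poch (-(N : ℝ)) (∑ i, γ i)) *
        mono γ x

/-- One-variable Hahn polynomial `Q_n(x; a, b, M)` (a `₃F₂` sum). -/
noncomputable def hahn1 (n : ℕ) (x a b M : ℝ) : ℝ :=
  ∑ k ∈ Finset.range (n + 1),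
    poch (-(n : ℝ)) k * poch ((n : ℝ) + a + b + 1) k * poch (-x) k /
      (poch (a + 1) k * poch (-M) k * (Nat.factorial k : ℝ))

/-- The parameter `a_j = κ_{j+1}+⋯+κ_{d+1} + 2|ν^{j+1}| + d - j` (1-based `j`). -/
noncomputable def aj (d : ℕ) (κ : Fin (d + 1) → ℝ) (ν : Fin d → ℕ) (j : Fin d) : ℝ :=
  (∑ i ∈ Finset.univ.filter (fun i : Fin (d + 1) => (j : ℕ) < (i : ℕ)), κ i) +
    2 * (∑ i ∈ Finset.univ.filter (fun i : Fin d => (j : ℕ) < (i : ℕ)), (ν i : ℝ)) +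
    ((d - 1 - (j : ℕ) : ℕ) : ℝ)

/-- `|x_{j-1}| = x_1 + ⋯ + x_{j-1}` (1-based `j`). -/
noncomputable def sumLt (d : ℕ) (x : Fin (d + 1) → ℕ) (j : Fin d) : ℝ :=
  ∑ i ∈ Finset.univ.filter (fun i : Fin (d + 1) => (i : ℕ) < (j : ℕ)), (x i : ℝ)

/-- `|ν^{j+1}| = ν_{j+1} + ⋯ + ν_d` (1-based `j`). -/
noncomputable def sumGt (d : ℕ) (ν : Fin d → ℕ) (j : Fin d) : ℝ :=
  ∑ i ∈ Finset.univ.filter (fun i : Fin d => (j : ℕ) < (i : ℕ)), (ν i : ℝ)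

/-- Hahn polynomial of `d` variables `H_ν(x; κ, N)`. -/
noncomputable def hahnH (d N : ℕ) (κ : Fin (d + 1) → ℝ) (ν : Fin d → ℕ)
    (x : Fin (d + 1) → ℕ) : ℝ :=
  (-1 : ℝ) ^ (∑ i, ν i) / poch (-(N : ℝ)) (∑ i, ν i) *
    ∏ j : Fin d,
      poch (κ j.castSucc + 1) (ν j) / poch (aj d κ ν j + 1) (ν j) *
        poch (-(N : ℝ) + sumLt d x j + sumGt d ν j) (ν j) *
        hahn1 (ν j) (x j.castSucc : ℝ) (κ j.castSucc) (aj d κ ν j)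
          ((N : ℝ) - sumLt d x j - sumGt d ν j)

/-- Squared norm `B_ν(κ, N)` of the Hahn polynomial `H_ν(·; κ, N)`. -/
noncomputable def Bnorm (d N : ℕ) (κ : Fin (d + 1) → ℝ) (ν : Fin d → ℕ) : ℝ :=
  (-1 : ℝ) ^ (∑ i, ν i) * poch ((∑ i, κ i) + d + 1) (N + ∑ i, ν i) /
      (poch (-(N : ℝ)) (∑ i, ν i) * poch ((∑ i, κ i) + d + 1) N *
        poch ((∑ i, κ i) + d + 1) (2 * ∑ i, ν i)) *
    ∏ j : Fin d,
      poch (κ j.castSucc + aj d κ ν j + 1) (2 * ν j) * poch (κ j.castSucc + 1) (ν j) *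
          (Nat.factorial (ν j) : ℝ) /
        (poch (κ j.castSucc + aj d κ ν j + 1) (ν j) * poch (aj d κ ν j + 1) (ν j))

/-- Projection `Q_{α,n}(x; κ, N)` of `m_α/(κ+1)_α` onto the space of degree `n`. -/
noncomputable def monicQn (d N : ℕ) (κ : Fin (d + 1) → ℝ) (α : Fin (d + 1) → ℕ) (n : ℕ)
    (x : Fin (d + 1) → ℝ) : ℝ :=
  (-1 : ℝ) ^ (∑ i, α i) * poch (-(N : ℝ)) (∑ i, α i) * poch ((∑ i, κ i) + d + 1) (2 * n) /
      (poch (-(N : ℝ)) n * poch ((∑ i, κ i) + d + 1) ((∑ i, α i) + n)) *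
    ∑ β ∈ ZN d n,
      pochV (fun i => -(α i : ℝ)) β / (mfact β * pochV (fun i => κ i + 1) β) *
        monicQ d N κ β x

/-- The kernel `E_k(x, y; κ) = Σ_{|γ|=k} (-x)_γ (-y)_γ / (γ! (κ+1)_γ)`. -/
noncomputable def Efun (d : ℕ) (κ : Fin (d + 1) → ℝ) (x y : Fin (d + 1) → ℕ) (k : ℕ) : ℝ :=
  ∑ γ ∈ ZN d k,
    pochV (fun i => -(x i : ℝ)) γ * pochV (fun i => -(y i : ℝ)) γ /
      (mfact γ * pochV (fun i => κ i + 1) γ)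

/-- Monic Jacobi polynomial on the simplex `R_α^κ(x)`. -/
noncomputable def jacobiR (d : ℕ) (κ : Fin (d + 1) → ℝ) (α : Fin (d + 1) → ℕ)
    (x : Fin d → ℝ) : ℝ :=
  (-1 : ℝ) ^ (∑ i, α i) * pochV (fun i => κ i + 1) α /
      poch ((∑ i, κ i) + d + (∑ i, α i)) (∑ i, α i) *
    ∑ γ ∈ below α,
      pochV (fun i => -(α i : ℝ)) γ * poch ((∑ i, κ i) + d + (∑ i, α i)) (∑ i, γ i) /
          (pochV (fun i => κ i + 1) γ * mfact γ) *
        ∏ i, (Fin.snoc x (1 - ∑ i, x i) : Fin (d + 1) → ℝ) i ^ γ i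

/-- One-variable Krawtchouk polynomial `K_n(x; p, M)`. -/
noncomputable def kraw1 (n : ℕ) (x p M : ℝ) : ℝ :=
  ∑ k ∈ Finset.range (n + 1),
    poch (-(n : ℝ)) k * poch (-x) k / (poch (-M) k * (Nat.factorial k : ℝ) * p ^ k)

/-- The extended parameter `𝛒 = (ρ_1, …, ρ_d, 1 - |ρ|)`. -/
noncomputable def brho (d : ℕ) (ρ : Fin d → ℝ) : Fin (d + 1) → ℝ :=
  Fin.snoc ρ (1 - ∑ i, ρ i)

/-- `𝛒^γ = ∏ i 𝛒_i^{γ i}`. -/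
noncomputable def bpow (d : ℕ) (ρ : Fin d → ℝ) (γ : Fin (d + 1) → ℕ) : ℝ :=
  ∏ i, brho d ρ i ^ γ i

/-- `|𝛒_j| = ρ_1 + ⋯ + ρ_j` (1-based `j`). -/
noncomputable def sumLe (d : ℕ) (ρ : Fin d → ℝ) (j : Fin d) : ℝ :=
  ∑ i ∈ Finset.univ.filter (fun i : Fin d => (i : ℕ) ≤ (j : ℕ)), ρ i

/-- `|𝛒_{j-1}| = ρ_1 + ⋯ + ρ_{j-1}` (1-based `j`). -/
noncomputable def sumLtρ (d : ℕ) (ρ : Fin d → ℝ) (j : Fin d) : ℝ :=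
  ∑ i ∈ Finset.univ.filter (fun i : Fin d => (i : ℕ) < (j : ℕ)), ρ i

/-- Krawtchouk polynomial of `d` variables `K_ν(x; ρ, N)`. -/
noncomputable def krawH (d N : ℕ) (ρ : Fin d → ℝ) (ν : Fin d → ℕ)
    (x : Fin (d + 1) → ℕ) : ℝ :=
  (-1 : ℝ) ^ (∑ i, ν i) / poch (-(N : ℝ)) (∑ i, ν i) *
    ∏ j : Fin d,
      ρ j ^ ν j / (1 - sumLe d ρ j) ^ ν j *
        poch (-(N : ℝ) + sumLt d x j + sumGt d ν j) (ν j) *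
        kraw1 (ν j) (x j.castSucc : ℝ) (ρ j / (1 - sumLtρ d ρ j))
          ((N : ℝ) - sumLt d x j - sumGt d ν j)

/-- Squared norm `C_ν(ρ, N)` of the Krawtchouk polynomial `K_ν(·; ρ, N)`. -/
noncomputable def Cnorm (d N : ℕ) (ρ : Fin d → ℝ) (ν : Fin d → ℕ) : ℝ :=
  (-1 : ℝ) ^ (∑ i, ν i) / (poch (-(N : ℝ)) (∑ i, ν i) * (Nat.factorial N : ℝ)) *
    ∏ j : Fin d,
      (Nat.factorial (ν j) : ℝ) * ρ j ^ ν j /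
        (1 - sumLe d ρ j) ^ ((ν j : ℤ) - ((Fin.snoc ν 0 : Fin (d + 1) → ℕ) j.succ : ℤ))

/-- Monic Krawtchouk polynomial `L_α(x; ρ, N)`. -/
noncomputable def monicL (d N : ℕ) (ρ : Fin d → ℝ) (α : Fin (d + 1) → ℕ)
    (x : Fin (d + 1) → ℝ) : ℝ :=
  poch (-(N : ℝ)) (∑ i, α i) * bpow d ρ α *
    ∑ γ ∈ below α,
      pochV (fun i => -(α i : ℝ)) γ * (-1 : ℝ) ^ (∑ i, γ i) /
          (mfact γ * poch (-(N : ℝ)) (∑ i, γ i) * bpow d ρ γ) *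
        mono γ x

/-- Projection `L_{α,n}(x; ρ, N)` of `m_α/𝛒^α` onto the space of degree `n`. -/
noncomputable def monicLn (d N : ℕ) (ρ : Fin d → ℝ) (α : Fin (d + 1) → ℕ) (n : ℕ)
    (x : Fin (d + 1) → ℝ) : ℝ :=
  (-1 : ℝ) ^ (∑ i, α i) * poch (-(N : ℝ)) (∑ i, α i) / poch (-(N : ℝ)) n *
    ∑ β ∈ ZN d n,
      pochV (fun i => -(α i : ℝ)) β / (mfact β * bpow d ρ β) * monicL d N ρ β x

/-- The kernel `F_k(x, y; ρ) = Σ_{|γ|=k} (-x)_γ (-y)_γ / (γ! 𝛒^γ)`. -/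
noncomputable def Ffun (d : ℕ) (ρ : Fin d → ℝ) (x y : Fin (d + 1) → ℕ) (k : ℕ) : ℝ :=
  ∑ γ ∈ ZN d k,
    pochV (fun i => -(x i : ℝ)) γ * pochV (fun i => -(y i : ℝ)) γ / (mfact γ * bpow d ρ γ)

/-!
With `s = y_1 + ⋯ + y_{d+1}`, both sides are expanded in the monomials `y^γ s^(N - |γ|)`, `γ ≤ β`.
For the Jacobi side this is just homogenisation of `R_β^κ` at `y / s`. For the Hahn side,
`m_γ(α) = ∏ α_i (α_i - 1) ⋯ (α_i - γ_i + 1)`, so applying `y^γ ∂^γ` to the multinomial expansion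
of `s^N` gives `∑_{|α| = N} N!/α! m_γ(α) y^α = N (N - 1) ⋯ (N - |γ| + 1) y^γ s^(N - |γ|)`; this
falling factorial is `(-1)^|γ| (-N)_|γ|`, which cancels the `(-N)_|γ|` in the coefficients of
`Q_β`. The two expansions then agree term by term.
-/

lemma poch_neg_natCast (a : ℕ) : ∀ k : ℕ, poch (-(a : ℝ)) k = (-1) ^ k * a.descFactorial k
  | 0 => by simp [poch]
  | k + 1 => by
    rw [poch, poch_neg_natCast a k, Nat.descFactorial_succ, pow_succ]
    rcases le_or_gt k a with h | h
    · push_cast [Nat.cast_sub h]; ring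
    · simp [Nat.descFactorial_of_lt h]

lemma neg_one_pow_mul_poch_neg_natCast (a k : ℕ) :
    (-1) ^ k * poch (-(a : ℝ)) k = a.descFactorial k := by
  rw [poch_neg_natCast, ← mul_assoc, ← pow_add, ← two_mul, pow_mul]
  norm_num

lemma poch_neg_natCast_ne_zero {a k : ℕ} (h : k ≤ a) : poch (-(a : ℝ)) k ≠ 0 := by
  rw [poch_neg_natCast]
  exact mul_ne_zero (by simp) (by exact_mod_cast (Nat.descFactorial_pos.mpr h).ne')

lemma mono_natCast {m : ℕ} (γ α : Fin m → ℕ) :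
    mono γ (fun i => (α i : ℝ)) = ∏ i, ((α i).descFactorial (γ i) : ℝ) := by
  simp only [mono, pochV, poch_neg_natCast, prod_mul_distrib, prod_pow_eq_pow_sum, ← mul_assoc,
    ← pow_add, ← two_mul, pow_mul]
  norm_num

lemma mfact_ne_zero {m : ℕ} (γ : Fin m → ℕ) : mfact γ ≠ 0 :=
  prod_ne_zero_iff.mpr fun i _ => by exact_mod_cast (Nat.factorial_pos _).ne'

lemma mfact_add {m : ℕ} (δ γ : Fin m → ℕ) :
    mfact (δ + γ) = mfact δ * ∏ i, ((δ i + γ i).descFactorial (γ i) : ℝ) := by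
  rw [mfact, mfact, ← prod_mul_distrib]
  refine prod_congr rfl fun i _ => ?_
  have := Nat.factorial_mul_descFactorial (Nat.le_add_left (γ i) (δ i))
  rw [Nat.add_sub_cancel] at this
  exact_mod_cast this.symm

lemma mem_ZN {d M : ℕ} {α : Fin (d + 1) → ℕ} : α ∈ ZN d M ↔ ∑ i, α i = M := by
  refine ⟨fun h => (mem_filter.mp h).2, fun h => mem_filter.mpr ⟨?_, h⟩⟩
  refine Fintype.mem_piFinset.mpr fun i => mem_range_succ_iff.mpr ?_
  exact h ▸ single_le_sum (fun j _ => Nat.zero_le (α j)) (mem_univ i)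

lemma mem_below {m : ℕ} {α γ : Fin m → ℕ} : γ ∈ below α ↔ ∀ i, γ i ≤ α i := by
  simp [below]

lemma sum_le_sum_of_mem_below {m : ℕ} {α γ : Fin m → ℕ} (h : γ ∈ below α) :
    ∑ i, γ i ≤ ∑ i, α i :=
  sum_le_sum fun i _ => mem_below.mp h i

lemma sum_pow_eq_sum_ZN (d M : ℕ) (y : Fin (d + 1) → ℝ) :
    (∑ i, y i) ^ M = ∑ α ∈ ZN d M, (M.factorial : ℝ) / mfact α * ∏ i, y i ^ α i := by
  have hZN : ZN d M = piAntidiag univ M := by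
    ext α
    simp [mem_ZN]
  rw [hZN, sum_pow_eq_sum_piAntidiag]
  refine sum_congr rfl fun α hα => ?_
  have hM : (∏ i, (α i).factorial) * Nat.multinomial univ α = M.factorial := by
    rw [Nat.multinomial_spec, (mem_piAntidiag.mp hα).1]
  congr 1
  rw [eq_div_iff (mfact_ne_zero α), mfact, ← hM]
  push_cast
  ring

lemma sum_ZN_eq_sum_ZN_add {d N : ℕ} {γ : Fin (d + 1) → ℕ} (hγ : ∑ i, γ i ≤ N)
    (g : (Fin (d + 1) → ℕ) → ℝ) (hg : ∀ α, (∃ i, α i < γ i) → g α = 0) :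
    ∑ α ∈ ZN d N, g α = ∑ δ ∈ ZN d (N - ∑ i, γ i), g (δ + γ) := by
  have hmap : ∑ δ ∈ ZN d (N - ∑ i, γ i), g (δ + γ) =
      ∑ α ∈ (ZN d (N - ∑ i, γ i)).map (addRightEmbedding γ), g α :=
    (sum_map _ (addRightEmbedding γ) g).symm
  rw [hmap]
  refine (sum_subset (fun α hα => ?_) fun α hα hα' => hg α ?_).symm
  · obtain ⟨δ, hδ, rfl⟩ := mem_map.mp hα
    rw [mem_ZN] at hδ ⊢
    simp only [addRightEmbedding_apply, Pi.add_apply, sum_add_distrib, hδ]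
    omega
  · by_contra! hle
    refine hα' (mem_map.mpr ⟨α - γ, mem_ZN.mpr ?_, funext fun i => Nat.sub_add_cancel (hle i)⟩)
    simp only [Pi.sub_apply, sum_tsub_distrib _ fun i _ => hle i, mem_ZN.mp hα]

lemma sum_ZN_mul_mono (d N : ℕ) {γ : Fin (d + 1) → ℕ} (hγ : ∑ i, γ i ≤ N)
    (y : Fin (d + 1) → ℝ) :
    ∑ α ∈ ZN d N, (N.factorial : ℝ) / mfact α * mono γ (fun i => (α i : ℝ)) * ∏ i, y i ^ α i =
      N.descFactorial (∑ i, γ i) * (∏ i, y i ^ γ i) * (∑ i, y i) ^ (N - ∑ i, γ i) := by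
  rw [sum_ZN_eq_sum_ZN_add hγ, sum_pow_eq_sum_ZN, mul_sum]
  · refine sum_congr rfl fun δ _ => ?_
    have hN : ((N - ∑ i, γ i).factorial : ℝ) * N.descFactorial (∑ i, γ i) = N.factorial := by
      exact_mod_cast Nat.factorial_mul_descFactorial hγ
    have hD : ∏ i, ((δ i + γ i).descFactorial (γ i) : ℝ) ≠ 0 :=
      prod_ne_zero_iff.mpr fun i _ => by exact_mod_cast (Nat.descFactorial_pos.mpr le_add_self).ne'
    simp only [mono_natCast, mfact_add, Pi.add_apply, pow_add, prod_mul_distrib, ← hN]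
    field_simp [mfact_ne_zero δ]
  · rintro α ⟨i, hi⟩
    rw [mono_natCast, prod_eq_zero (mem_univ i) (by exact_mod_cast Nat.descFactorial_of_lt hi)]
    simp

lemma sum_ZN_mul_sum_mono (d N : ℕ) (C : ℝ) (c : (Fin (d + 1) → ℕ) → ℝ)
    {S : Finset (Fin (d + 1) → ℕ)} (hS : ∀ γ ∈ S, ∑ i, γ i ≤ N) (y : Fin (d + 1) → ℝ) :
    ∑ α ∈ ZN d N, (N.factorial : ℝ) / mfact α *
        (C * ∑ γ ∈ S, c γ * mono γ (fun i => (α i : ℝ))) * ∏ i, y i ^ α i =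
      C * ∑ γ ∈ S, c γ *
        (N.descFactorial (∑ i, γ i) * (∏ i, y i ^ γ i) * (∑ i, y i) ^ (N - ∑ i, γ i)) := by
  simp only [mul_sum, sum_mul]
  rw [sum_comm]
  refine sum_congr rfl fun γ hγ => ?_
  rw [← sum_ZN_mul_mono d N (hS γ hγ), mul_sum, mul_sum]
  exact sum_congr rfl fun α _ => by ring

lemma sum_ZN_mul_monicQ (d N : ℕ) (κ : Fin (d + 1) → ℝ) {β : Fin (d + 1) → ℕ}
    (hβ : ∑ i, β i ≤ N) (y : Fin (d + 1) → ℝ) :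
    ∑ α ∈ ZN d N, (N.factorial : ℝ) / mfact α * monicQ d N κ β (fun i => (α i : ℝ)) *
        ∏ i, y i ^ α i =
      poch (-(N : ℝ)) (∑ i, β i) * pochV (fun i => κ i + 1) β /
          poch ((∑ i, κ i) + d + (∑ i, β i)) (∑ i, β i) *
        ∑ γ ∈ below β,
          pochV (fun i => -(β i : ℝ)) γ * poch ((∑ i, κ i) + d + (∑ i, β i)) (∑ i, γ i) /
              (pochV (fun i => κ i + 1) γ * mfact γ) *
            ((∏ i, y i ^ γ i) * (∑ i, y i) ^ (N - ∑ i, γ i)) := by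
  have hbelow : ∀ γ ∈ below β, ∑ i, γ i ≤ N :=
    fun _ hγ => (sum_le_sum_of_mem_below hγ).trans hβ
  simp only [monicQ]
  rw [sum_ZN_mul_sum_mono d N _ _ hbelow]
  congr 1
  refine sum_congr rfl fun γ hγ => ?_
  have hp := poch_neg_natCast_ne_zero (hbelow γ hγ)
  rw [← neg_one_pow_mul_poch_neg_natCast]
  field_simp
  rw [← pow_mul, mul_comm _ 2, pow_mul]
  norm_num

lemma snoc_div_sum {d : ℕ} {y : Fin (d + 1) → ℝ} (hs : ∑ i, y i ≠ 0) :
    (Fin.snoc (fun j : Fin d => y j.castSucc / ∑ i, y i)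
        (1 - ∑ j : Fin d, y j.castSucc / ∑ i, y i) : Fin (d + 1) → ℝ) =
      fun i => y i / ∑ i, y i := by
  funext i
  induction i using Fin.lastCases with
  | last =>
    rw [Fin.snoc_last, ← sum_div, eq_div_iff hs, sub_mul, div_mul_cancel₀ _ hs,
      Fin.sum_univ_castSucc y]
    ring
  | cast j => rw [Fin.snoc_castSucc]

lemma pow_mul_jacobiR_div_sum (d N : ℕ) (κ : Fin (d + 1) → ℝ) {β : Fin (d + 1) → ℕ}
    (hβ : ∑ i, β i ≤ N) {y : Fin (d + 1) → ℝ} (hs : ∑ i, y i ≠ 0) :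
    (∑ i, y i) ^ N * jacobiR d κ β (fun j : Fin d => y j.castSucc / ∑ i, y i) =
      (-1 : ℝ) ^ (∑ i, β i) * pochV (fun i => κ i + 1) β /
          poch ((∑ i, κ i) + d + (∑ i, β i)) (∑ i, β i) *
        ∑ γ ∈ below β,
          pochV (fun i => -(β i : ℝ)) γ * poch ((∑ i, κ i) + d + (∑ i, β i)) (∑ i, γ i) /
              (pochV (fun i => κ i + 1) γ * mfact γ) *
            ((∏ i, y i ^ γ i) * (∑ i, y i) ^ (N - ∑ i, γ i)) := by
  rw [jacobiR, snoc_div_sum hs, mul_left_comm, mul_sum]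
  congr 1
  refine sum_congr rfl fun γ hγ => ?_
  rw [prod_congr rfl fun i _ => div_pow (y i) _ (γ i), prod_div_distrib, prod_pow_eq_pow_sum,
    ← Nat.sub_add_cancel ((sum_le_sum_of_mem_below hγ).trans hβ), pow_add, Nat.add_sub_cancel]
  field_simp

theorem jacobiR_generating_monicHahn_general (d N : ℕ) (κ : Fin (d + 1) → ℝ)
    (β : Fin (d + 1) → ℕ) (hβ : ∑ i, β i ≤ N)
    (y : Fin (d + 1) → ℝ) (hs : ∑ i, y i ≠ 0) :
    (∑ i, y i) ^ N * jacobiR d κ β (fun j : Fin d => y j.castSucc / ∑ i, y i) =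
      (-1 : ℝ) ^ (∑ i, β i) / poch (-(N : ℝ)) (∑ i, β i) *
        ∑ α ∈ ZN d N,
          (Nat.factorial N : ℝ) / mfact α * monicQ d N κ β (fun i => (α i : ℝ)) *
            ∏ i, y i ^ α i := by
  rw [pow_mul_jacobiR_div_sum d N κ hβ hs, sum_ZN_mul_monicQ d N κ hβ y]
  field_simp [poch_neg_natCast_ne_zero hβ]

/-- `R_β^κ` is a generating function for the monic Hahn polynomials. -/
theorem jacobiR_generating_monicHahn (d N : ℕ) (hd : 1 ≤ d) (κ : Fin (d + 1) → ℝ)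
    (hκ : ∀ i, -1 < κ i) (β : Fin (d + 1) → ℕ) (hβ : ∑ i, β i ≤ N)
    (y : Fin (d + 1) → ℝ) (hs : ∑ i, y i ≠ 0) :
    (∑ i, y i) ^ N * jacobiR d κ β (fun j : Fin d => y j.castSucc / ∑ i, y i) =
      (-1 : ℝ) ^ (∑ i, β i) / poch (-(N : ℝ)) (∑ i, β i) *
        ∑ α ∈ ZN d N,
          (Nat.factorial N : ℝ) / mfact α * monicQ d N κ β (fun i => (α i : ℝ)) *
            ∏ i, y i ^ α i :=
  jacobiR_generating_monicHahn_general d N κ β hβ y hs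
end

section
/- Let d ≥ 1, N ∈ ℕ, ρ ∈ ℝ^d with 0 < ρ_i < 1 and ρ_1+⋯+ρ_d < 1, and set 𝛒 = (ρ_1,…,ρ_d, 1−ρ_1−⋯−ρ_d) ∈ ℝ^{d+1}. Then for every α ∈ ℕ^{d+1} with |α| ≤ N and every x ∈ Z_N^{d+1}, the monic Hahn polynomial with parameter t𝛒 converges to the monic Krawtchouk polynomial: lim_{t → +∞} Q_α(x; t𝛒, N) = L_α(x; ρ, N). -/
open Finset

/-! With `κ = t𝛒` one has `|κ| = t`, so after moving `(κ+1)_α` and `(κ+1)_γ` next to the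
Pochhammer symbols `(t+d+|α|)_k` of matching order, every coefficient of `Q_α` involves `t` only
through ratios `(t𝛒+1)_β / (t+d+|α|)_{|β|}`. Numerator and denominator are polynomials in `t`
of the same degree `|β|` with leading coefficients `𝛒^β` and `1`, so the ratio tends to
`𝛒^β ≠ 0`, and the limits of the coefficients are those of `L_α`. -/

open Filter Topology

theorem poch_eq_prod_range (a : ℝ) (n : ℕ) : poch a n = ∏ k ∈ range n, (a + k) := by
  induction n with
  | zero => rfl
  | succ n ih => rw [poch, ih, prod_range_succ]

theorem tendsto_poch_mul_add_div_pow (a b : ℝ) (n : ℕ) :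
    Tendsto (fun t : ℝ => poch (t * a + b) n / t ^ n) atTop (𝓝 (a ^ n)) := by
  have hfactor (k : ℕ) : Tendsto (fun t : ℝ => a + (b + k) / t) atTop (𝓝 a) := by
    simpa using (tendsto_const_nhds (x := a)).add (tendsto_const_nhds.div_atTop tendsto_id)
  have hprod := tendsto_finsetProd (range n) fun k _ => hfactor k
  rw [prod_const, card_range] at hprod
  refine hprod.congr' ?_
  filter_upwards [eventually_ne_atTop 0] with t ht
  rw [poch_eq_prod_range, show t ^ n = ∏ _k ∈ range n, t by simp, ← prod_div_distrib]
  refine prod_congr rfl fun k _ => ?_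
  field_simp
  ring

theorem tendsto_pochV_div_poch {m : ℕ} (c : Fin m → ℝ) (e : ℝ) (β : Fin m → ℕ) :
    Tendsto (fun t : ℝ => pochV (fun i => t * c i + 1) β / poch (t + e) (∑ i, β i)) atTop
      (𝓝 (∏ i, c i ^ β i)) := by
  have hnum := tendsto_finsetProd univ fun i _ => tendsto_poch_mul_add_div_pow (c i) 1 (β i)
  have hden := tendsto_poch_mul_add_div_pow 1 e (∑ i, β i)
  rw [one_pow] at hden
  refine (div_one (∏ i, c i ^ β i) ▸ hnum.div hden one_ne_zero).congr' ?_
  filter_upwards [eventually_ne_atTop 0] with t ht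
  rw [Pi.div_apply, pochV, prod_div_distrib, prod_pow_eq_pow_sum, mul_one,
    div_div_div_cancel_right₀ (pow_ne_zero _ ht)]

theorem monicQ_smul_eq (d N : ℕ) (c : Fin (d + 1) → ℝ) (hc : ∑ i, c i = 1)
    (α : Fin (d + 1) → ℕ) (x : Fin (d + 1) → ℝ) (t : ℝ) :
    monicQ d N (fun i => t * c i) α x =
      poch (-(N : ℝ)) (∑ i, α i) *
          (pochV (fun i => t * c i + 1) α / poch (t + ((d : ℝ) + (∑ i, α i : ℕ))) (∑ i, α i)) *
        ∑ γ ∈ below α,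
          pochV (fun i => -(α i : ℝ)) γ * (-1 : ℝ) ^ (∑ i, γ i) /
              (mfact γ * poch (-(N : ℝ)) (∑ i, γ i)) *
            (pochV (fun i => t * c i + 1) γ / poch (t + ((d : ℝ) + (∑ i, α i : ℕ))) (∑ i, γ i))⁻¹ *
            mono γ x := by
  rw [monicQ, ← mul_sum, hc, mul_one, add_assoc, mul_sum, mul_sum]
  refine sum_congr rfl fun γ _ => ?_
  rw [inv_div]
  ring

theorem tendsto_monicQ_smul (d N : ℕ) (c : Fin (d + 1) → ℝ) (hc : ∑ i, c i = 1)
    (hc0 : ∀ i, c i ≠ 0) (α : Fin (d + 1) → ℕ) (x : Fin (d + 1) → ℝ) :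
    Tendsto (fun t : ℝ => monicQ d N (fun i => t * c i) α x) atTop
      (𝓝 (poch (-(N : ℝ)) (∑ i, α i) * (∏ i, c i ^ α i) *
        ∑ γ ∈ below α,
          pochV (fun i => -(α i : ℝ)) γ * (-1 : ℝ) ^ (∑ i, γ i) /
              (mfact γ * poch (-(N : ℝ)) (∑ i, γ i) * ∏ i, c i ^ γ i) *
            mono γ x)) := by
  have hsummand (γ : Fin (d + 1) → ℕ) :=
    ((tendsto_pochV_div_poch c ((d : ℝ) + (∑ i, α i : ℕ)) γ).inv₀
      (prod_ne_zero_iff.2 fun i _ => pow_ne_zero _ (hc0 i))).const_mul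
      (pochV (fun i => -(α i : ℝ)) γ * (-1 : ℝ) ^ (∑ i, γ i) /
        (mfact γ * poch (-(N : ℝ)) (∑ i, γ i))) |>.mul_const (mono γ x)
  have hlim := ((tendsto_pochV_div_poch c ((d : ℝ) + (∑ i, α i : ℕ)) α).const_mul
    (poch (-(N : ℝ)) (∑ i, α i))).mul (tendsto_finsetSum (below α) fun γ _ => hsummand γ)
  simp only [monicQ_smul_eq d N c hc]
  convert hlim using 2
  exact congrArg _ (sum_congr rfl fun γ _ => by ring)

theorem sum_brho (d : ℕ) (ρ : Fin d → ℝ) : ∑ i, brho d ρ i = 1 := by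
  simp [brho, Fin.sum_univ_castSucc]

theorem brho_ne_zero (d : ℕ) (ρ : Fin d → ℝ) (hρ : ∀ i, ρ i ≠ 0) (hρs : ∑ i, ρ i ≠ 1)
    (i : Fin (d + 1)) : brho d ρ i ≠ 0 := by
  induction i using Fin.lastCases with
  | last => simpa [brho, sub_eq_zero] using hρs.symm
  | cast j => simpa [brho] using hρ j

theorem monicHahn_tendsto_monicKrawtchouk_general (d N : ℕ) (ρ : Fin d → ℝ)
    (hρ : ∀ i, 0 < ρ i ∧ ρ i < 1) (hρs : ∑ i, ρ i < 1)
    (α : Fin (d + 1) → ℕ)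
    (x : Fin (d + 1) → ℕ) :
    Filter.Tendsto
      (fun t : ℝ => monicQ d N (fun i => t * brho d ρ i) α (fun i => (x i : ℝ)))
      Filter.atTop (nhds (monicL d N ρ α (fun i => (x i : ℝ)))) :=
  tendsto_monicQ_smul d N (brho d ρ) (sum_brho d ρ)
    (brho_ne_zero d ρ (fun i => (hρ i).1.ne') hρs.ne) α _

/-- the monic Hahn polynomials with parameter `t𝛒` converge to the monic
Krawtchouk polynomials as `t → ∞`. -/
theorem monicHahn_tendsto_monicKrawtchouk (d N : ℕ) (hd : 1 ≤ d) (ρ : Fin d → ℝ)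
    (hρ : ∀ i, 0 < ρ i ∧ ρ i < 1) (hρs : ∑ i, ρ i < 1)
    (α : Fin (d + 1) → ℕ) (hα : ∑ i, α i ≤ N)
    (x : Fin (d + 1) → ℕ) (hx : x ∈ ZN d N) :
    Filter.Tendsto
      (fun t : ℝ => monicQ d N (fun i => t * brho d ρ i) α (fun i => (x i : ℝ)))
      Filter.atTop (nhds (monicL d N ρ α (fun i => (x i : ℝ)))) :=
  monicHahn_tendsto_monicKrawtchouk_general d N ρ hρ hρs α x
end
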